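/- arXiv:0706.3520 — 3 statements merged into one kernel-verified Lean document; each statement's English description precedes it below -/
import Mathlib

section
/- Let X₁,…,X_m be independent real‑valued random variables with values in [0,1] and continuous cumulative distribution functions, and let Y₁ ≤ Y₂ ≤ … ≤ Y_m be their order statistics. Let 0 = c₁ < d₁ < c₂ < d₂ < … < c_s < d_s = 1 be endpoints of s disjoint intervals (c_q, d_q), and let k₁,…,k_s be positive integers with k₁ + … + k_s = m. For each q set w_{q,1} = 1 + Σ_{i=1}^{q−1} k_i and w_{q,k_q} = Σ_{i=1}^{q} k_i. Let E = ⋂_{q=1}^{s} ({c_q < Y_{w_{q,1}}} ∩ {Y_{w_{q,k_q}} < d_q}) be the event that exactly k_q of the order statistics fall in the q‑th interval for every q, and let B be an arbitrary event. Then Pr(E ∩ B) = Σ_{T ⊆ {1,…,s}} (−1)^{|T|} · Pr( ⋂_{q ∈ T} {Y_{w_{q,1}} ≤ c_q} ∩ ⋂_{q=1}^{s} {Y_{w_{q,k_q}} ≤ d_q} ∩ B ); that is, the probability equals the inclusion–exclusion alternating sum, over subsets of the lower endpoints, of the joint cumulative distribution functions of the indicated order statistics relative to the event B. -/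
/-!
Lower endpoints are handled exactly: `c < Y` is the complement of `Y ≤ c`, so the event is
`⋂_q {Y_{w_{q,1}} ≤ c_q}ᶜ` intersected with `{∀ q, Y_{w_{q,k_q}} < d_q} ∩ B`, and inclusion–exclusion
over the complements gives the alternating sum. Upper endpoints are handled almost surely: each
order statistic equals one of the `X_i`, whose continuous cdfs leave no atoms, so `Y < d` and
`Y ≤ d` agree outside a null set.
-/

open MeasureTheory ProbabilityTheory Finset

section InclusionExclusion

variable {Ω ι : Type*} [MeasurableSpace Ω] {μ : Measure Ω} [IsFiniteMeasure μ] [DecidableEq ι]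

theorem measureReal_inter_biInter_compl {A : ι → Set Ω} (hA : ∀ i, MeasurableSet (A i))
    (s : Finset ι) (D : Set Ω) :
    μ.real (D ∩ ⋂ i ∈ s, (A i)ᶜ) = ∑ T ∈ s.powerset, (-1) ^ #T * μ.real (D ∩ ⋂ i ∈ T, A i) := by
  induction s using Finset.induction_on generalizing D with
  | empty => simp
  | @insert a s ha ih =>
    have hsplit : ∀ T : Finset ι, μ.real ((D \ A a) ∩ ⋂ i ∈ T, A i)
        = μ.real (D ∩ ⋂ i ∈ T, A i) - μ.real (D ∩ ⋂ i ∈ insert a T, A i) := by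
      intro T
      rw [eq_sub_iff_add_eq, ← measureReal_sdiff_add_inter (s := D ∩ ⋂ i ∈ T, A i) (hA a)]
      congr 1 <;> congr 1 <;> ext ω <;> simp only [Set.mem_inter_iff, Set.mem_sdiff, Set.mem_iInter,
        Finset.mem_insert, forall_eq_or_imp] <;> tauto
    have hD : D ∩ ⋂ i ∈ insert a s, (A i)ᶜ = (D \ A a) ∩ ⋂ i ∈ s, (A i)ᶜ := by
      ext ω; simp only [Set.mem_inter_iff, Set.mem_sdiff, Set.mem_iInter, Finset.mem_insert,
        forall_eq_or_imp, Set.mem_compl_iff]; tauto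
    rw [hD, ih, sum_powerset_insert ha, ← sum_add_distrib]
    refine sum_congr rfl fun T hT => ?_
    rw [hsplit, card_insert_of_notMem fun haT => ha (mem_powerset.mp hT haT), pow_succ]
    ring

end InclusionExclusion

theorem ae_ne_of_continuousAt_cdf {Ω : Type*} [MeasurableSpace Ω] {μ : Measure Ω}
    [IsProbabilityMeasure μ] {X : Ω → ℝ} (hX : Measurable X) {t : ℝ}
    (hcont : ContinuousAt (fun x => μ.real {ω | X ω ≤ x}) t) : ∀ᵐ ω ∂μ, X ω ≠ t := by
  have := Measure.isProbabilityMeasure_map (μ := μ) hX.aemeasurable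
  have hcdf : ⇑(cdf (μ.map X)) = fun x => μ.real {ω | X ω ≤ x} := by
    funext x; rw [cdf_eq_real, map_measureReal_apply hX measurableSet_Iic]; rfl
  have hleft : Function.leftLim (cdf (μ.map X)) t = cdf (μ.map X) t := by
    rw [hcdf]; exact hcont.continuousWithinAt.leftLim_eq
  rw [ae_iff]
  simp only [ne_eq, not_not]
  calc μ {ω | X ω = t} = μ.map X {t} := (Measure.map_apply hX (measurableSet_singleton t)).symm
    _ = 0 := by
      rw [← measure_cdf (μ.map X), StieltjesFunction.measure_singleton, hleft, sub_self,
        ENNReal.ofReal_zero]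

section OrderStatistic

variable {Ω α : Type*} [LinearOrder α] {m : ℕ}

def orderStatistic (X : Fin m → Ω → α) (j : Fin m) (ω : Ω) : α :=
  X (Tuple.sort (fun i => X i ω) j) ω

theorem orderStatistic_le_iff (X : Fin m → Ω → α) (j : Fin m) (t : α) (ω : Ω) :
    orderStatistic X j ω ≤ t ↔ (j : ℕ) < #{i | X i ω ≤ t} := by
  set σ := Tuple.sort fun i => X i ω
  have hcount : #{i | X (σ i) ω ≤ t} = #{i | X i ω ≤ t} := by
    simp only [card_filter]
    exact Equiv.sum_comp σ fun i => if X i ω ≤ t then 1 else 0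
  rw [← hcount]
  exact (Tuple.lt_card_le_iff_apply_le_of_monotone (Tuple.monotone_sort fun i => X i ω)).symm

theorem measurable_orderStatistic [MeasurableSpace Ω] {X : Fin m → Ω → ℝ}
    (hX : ∀ i, Measurable (X i)) (j : Fin m) : Measurable (orderStatistic X j) := by
  refine measurable_of_Iic fun t => ?_
  have hcard : Measurable fun ω => #{i | X i ω ≤ t} := by
    simp only [card_filter]
    exact Finset.measurable_sum _ fun i _ =>
      Measurable.ite (measurableSet_le (hX i) measurable_const) measurable_const measurable_const
  convert hcard measurableSet_Ioi using 1
  ext ω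
  exact orderStatistic_le_iff X j t ω

theorem ae_orderStatistic_ne [MeasurableSpace Ω] {μ : Measure Ω} {X : Fin m → Ω → α} {t : α}
    (hX : ∀ i, ∀ᵐ ω ∂μ, X i ω ≠ t) (j : Fin m) : ∀ᵐ ω ∂μ, orderStatistic X j ω ≠ t := by
  filter_upwards [ae_all_iff.2 hX] with ω hω using hω _

end OrderStatistic

theorem stmt0_general {Ω : Type*} [MeasurableSpace Ω] (μ : Measure Ω) [IsProbabilityMeasure μ]
    (m : ℕ) (X : Fin m → Ω → ℝ) (hmeas : ∀ i, Measurable (X i))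
    (hcont : ∀ i, Continuous fun x => (μ {ω | X i ω ≤ x}).toReal)
    -- the order statistics: `Y · ω` is the nondecreasing rearrangement of `X · ω`
    (Y : Fin m → Ω → ℝ)
    (hY : ∀ ω, (fun k => Y k ω) = (fun i => X i ω) ∘ Tuple.sort (fun i => X i ω))
    (s : ℕ) (c d : Fin s → ℝ)
    (k : Fin s → ℕ)
    -- `w₁ q` is the 0-based index of `Y_{w_{q,1}}`, `wk q` that of `Y_{w_{q,k_q}}`
    (w₁ wk : Fin s → Fin m)
    (B : Set Ω) :
    (μ ({ω | ∀ q, c q < Y (w₁ q) ω ∧ Y (wk q) ω < d q} ∩ B)).toReal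
      = ∑ T : Finset (Fin s), (-1 : ℝ) ^ T.card
          * (μ ({ω | ∀ q ∈ T, Y (w₁ q) ω ≤ c q}
              ∩ {ω | ∀ q, Y (wk q) ω ≤ d q} ∩ B)).toReal := by
  classical
  obtain rfl : Y = orderStatistic X := funext fun j => funext fun ω => congrFun (hY ω) j
  have hnoAtom : ∀ᵐ ω ∂μ, ∀ q, orderStatistic X (wk q) ω ≠ d q := ae_all_iff.2 fun q =>
    ae_orderStatistic_ne (fun i => ae_ne_of_continuousAt_cdf (hmeas i) (hcont i).continuousAt) _
  have hE : ({ω | ∀ q, c q < orderStatistic X (w₁ q) ω ∧ orderStatistic X (wk q) ω < d q} ∩ B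
      : Set Ω) =ᵐ[μ] (({ω | ∀ q, orderStatistic X (wk q) ω ≤ d q} ∩ B)
        ∩ ⋂ q ∈ univ, {ω | orderStatistic X (w₁ q) ω ≤ c q}ᶜ : Set Ω) := by
    refine Filter.eventuallyEq_set.2 ?_
    filter_upwards [hnoAtom] with ω hω
    simp only [Set.mem_inter_iff, Set.mem_ofPred_eq, Set.mem_iInter, Set.mem_compl_iff, not_le,
      mem_univ, forall_const]
    have hlt : ∀ q, orderStatistic X (wk q) ω < d q ↔ orderStatistic X (wk q) ω ≤ d q :=
      fun q => ⟨le_of_lt, fun h => h.lt_of_ne (hω q)⟩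
    simp only [hlt, forall_and]
    tauto
  simp only [← measureReal_def]
  rw [measureReal_congr hE, measureReal_inter_biInter_compl
    (fun q => measurableSet_le (measurable_orderStatistic hmeas _) measurable_const), powerset_univ]
  refine sum_congr rfl fun T _ => ?_
  congr 2
  ext ω
  simp only [Set.mem_inter_iff, Set.mem_ofPred_eq, Set.mem_iInter]
  tauto

/-- Let `X₁, …, X_m` be independent random variables in `[0,1]` with
continuous cdfs and order statistics `Y₁ ≤ … ≤ Y_m`.  For disjoint intervals
`0 = c₁ < d₁ < c₂ < … < c_s < d_s = 1`, positive counts `k₁ + … + k_s = m`, with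
`w₁ q` (resp. `wk q`) the 0-based index of the smallest (resp. largest) order statistic
assigned to the `q`-th interval, and any event `B`, the probability of
`E ∩ B = ⋂_q ({c_q < Y_{w_{q,1}}} ∩ {Y_{w_{q,k_q}} < d_q}) ∩ B` equals the
inclusion–exclusion sum `∑_{T ⊆ {1,…,s}} (−1)^{|T|}
  Pr(⋂_{q∈T} {Y_{w_{q,1}} ≤ c_q} ∩ ⋂_q {Y_{w_{q,k_q}} ≤ d_q} ∩ B)`. -/
theorem stmt0 {Ω : Type*} [MeasurableSpace Ω] (μ : Measure Ω) [IsProbabilityMeasure μ]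
    (m : ℕ) (X : Fin m → Ω → ℝ) (hmeas : ∀ i, Measurable (X i))
    (hrange : ∀ i ω, X i ω ∈ Set.Icc (0 : ℝ) 1)
    (hindep : iIndepFun X μ)
    (hcont : ∀ i, Continuous fun x => (μ {ω | X i ω ≤ x}).toReal)
    -- the order statistics: `Y · ω` is the nondecreasing rearrangement of `X · ω`
    (Y : Fin m → Ω → ℝ)
    (hY : ∀ ω, (fun k => Y k ω) = (fun i => X i ω) ∘ Tuple.sort (fun i => X i ω))
    (s : ℕ) (hs : 0 < s) (c d : Fin s → ℝ)
    (hc0 : c ⟨0, hs⟩ = 0) (hd1 : d ⟨s - 1, Nat.sub_lt hs Nat.one_pos⟩ = 1)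
    (hcd : ∀ q, c q < d q)
    (hdc : ∀ q : Fin s, ∀ h : (q : ℕ) + 1 < s, d q < c ⟨(q : ℕ) + 1, h⟩)
    (k : Fin s → ℕ) (hk : ∀ q, 0 < k q) (hksum : ∑ q, k q = m)
    -- `w₁ q` is the 0-based index of `Y_{w_{q,1}}`, `wk q` that of `Y_{w_{q,k_q}}`
    (w₁ wk : Fin s → Fin m)
    (hw₁ : ∀ q, (w₁ q : ℕ) = ∑ i ∈ Finset.Iio q, k i)
    (hwk : ∀ q, (wk q : ℕ) + 1 = ∑ i ∈ Finset.Iic q, k i)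
    (B : Set Ω) (hB : MeasurableSet B) :
    (μ ({ω | ∀ q, c q < Y (w₁ q) ω ∧ Y (wk q) ω < d q} ∩ B)).toReal
      = ∑ T : Finset (Fin s), (-1 : ℝ) ^ T.card
          * (μ ({ω | ∀ q ∈ T, Y (w₁ q) ω ≤ c q}
              ∩ {ω | ∀ q, Y (wk q) ω ≤ d q} ∩ B)).toReal :=
  stmt0_general μ m X hmeas hcont Y hY s c d k w₁ wk B
end

section
/- Let X₁,…,X_m be independent real‑valued random variables with values in [0,1] such that X₁,…,X_n all have the common continuous cumulative distribution function F and X_{n+1},…,X_m all have the common continuous cumulative distribution function G, and let Y₁ ≤ … ≤ Y_m be the order statistics of X₁,…,X_m. Fix indices 1 ≤ n₁ < n₂ < … < n_e ≤ m, points 0 = y₀ ≤ y₁ ≤ … ≤ y_e ≤ y_{e+1} = 1, and an integer 0 ≤ j ≤ n, and let B be the event that exactly j of X₁,…,X_n fall in the interval [0, y₁]. Then Pr({Y_{n₁} ≤ y₁} ∩ {Y_{n₂} ≤ y₂} ∩ … ∩ {Y_{n_e} ≤ y_e} ∩ B) = Σ_{i ∈ I} Σ_{λ} n!(m−n)! ·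 ∏_{a=1}^{e+1} [F(y_a) − F(y_{a−1})]^{λ_a} [G(y_a) − G(y_{a−1})]^{i_a − i_{a−1} − λ_a} / ( λ_a! (i_a − i_{a−1} − λ_a)! ), where the outer sum is over the index set I = { (i₀, i₁, …, i_{e+1}) : 0 = i₀ ≤ i₁ ≤ … ≤ i_e ≤ i_{e+1} = m and i_a ≥ n_a for all 1 ≤ a ≤ e }, and the inner sum is over all integer vectors λ = (λ₁, …, λ_{e+1}) with λ₁ = j, λ₁ + λ₂ + … + λ_{e+1} = n, and 0 ≤ λ_a ≤ i_a − i_{a−1} for every a. -/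
/-!
Sort every `X i` into the cell `[y₀, y₁], (y₁, y₂], …, (y_e, y_{e+1}]` containing it. The order
statistic `Y_{n_a}` is at most `y_a` iff at least `n_a` of the `X i` lie in the first `a` cells, and
`B` only looks at the first cell, so the event is the disjoint union, over the admissible cell
assignments `h : Fin m → Fin (e + 1)`, of `{ω | X i ω lies in cell h i for all i}`. By
independence such an event has probability `∏ₐ ΔFₐ ^ λₐ * ΔGₐ ^ μₐ`, where `λₐ` and `μₐ` count the
indices of each population sent to cell `a`. Grouping the assignments by the cumulative counts
`iₐ` and by `λ` gives the double sum, each group containing `n! / ∏ λₐ! * (m - n)! / ∏ μₐ!`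
assignments.
-/

open MeasureTheory ProbabilityTheory Finset Equiv
open scoped Nat

section Counting

variable {α β : Type*} [Fintype α] [DecidableEq β]

lemma exists_perm_comp_eq_of_card_fiber_eq {f g : α → β}
    (h : ∀ b, #{a | g a = b} = #{a | f a = b}) : ∃ σ : Perm α, f ∘ σ = g := by
  have e : ∀ b, {a // g a = b} ≃ {a // f a = b} := fun b =>
    Fintype.equivOfCardEq (by simp only [Fintype.card_subtype, h])
  exact ⟨Equiv.ofFiberEquiv e, funext (Equiv.ofFiberEquiv_map e)⟩

lemma exists_card_fiber_eq [Fintype β] (c : β → ℕ) (hc : ∑ b, c b = Fintype.card α) :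
    ∃ f : α → β, ∀ b, #{a | f a = b} = c b := by
  let e : α ≃ Σ b, Fin (c b) := Fintype.equivOfCardEq (by simp [hc])
  refine ⟨fun a => (e a).1, fun b => ?_⟩
  rw [card_equiv e (t := {x | x.1 = b}) (by simp), card_filter, Fintype.sum_sigma]
  simp [apply_ite]

theorem card_filter_card_fiber_eq_mul_prod_factorial [DecidableEq α] [Fintype β] (c : β → ℕ)
    (hc : ∑ b, c b = Fintype.card α) :
    #{f : α → β | ∀ b, #{a | f a = b} = c b} * ∏ b, (c b)! = (Fintype.card α)! := by
  -- `σ ↦ f₀ ∘ σ` maps the permutations onto the functions with the fiber sizes of `f₀`, and each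
  -- of its fibers is a coset of the stabiliser of `f₀`.
  obtain ⟨f₀, hf₀⟩ := exists_card_fiber_eq c hc
  obtain rfl : (fun b => #{a | f₀ a = b}) = c := funext hf₀
  set S : Finset (α → β) := {f | ∀ b, #{a | f a = b} = #{a | f₀ a = b}}
  have hstab : ∏ b, (#{a | f₀ a = b})! = #{σ : Perm α | f₀ ∘ σ = f₀} := by
    simp only [← Fintype.card_subtype, DomMulAct.stabilizer_card]
  have hfiber : ∀ f ∈ S, #{σ : Perm α | f₀ ∘ σ = f} = #{σ : Perm α | f₀ ∘ σ = f₀} := by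
    intro f hf
    obtain ⟨τ, rfl⟩ := exists_perm_comp_eq_of_card_fiber_eq (mem_filter.1 hf).2
    refine card_equiv (Equiv.mulRight τ⁻¹) fun σ => ?_
    simp [Perm.coe_mul, ← Function.comp_assoc, Equiv.comp_symm_eq]
  have hmaps : ∀ σ ∈ (univ : Finset (Perm α)), f₀ ∘ σ ∈ S := fun σ _ =>
    mem_filter.2 ⟨mem_univ _, fun b => card_equiv σ (by simp)⟩
  rw [hstab, ← Fintype.card_perm, ← Finset.card_univ, card_eq_sum_card_fiberwise hmaps,
    sum_congr rfl hfiber, sum_const, smul_eq_mul]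

theorem card_filter_card_fiber_pair_mul_prod_factorial [DecidableEq α] [Fintype β]
    (p : α → Prop) [DecidablePred p] (c d : β → ℕ)
    (hc : ∑ b, c b = #{a | p a}) (hd : ∑ b, d b = #{a | ¬ p a}) :
    #{f : α → β | ∀ b, #{a | p a ∧ f a = b} = c b ∧ #{a | ¬ p a ∧ f a = b} = d b}
        * ((∏ b, (c b)!) * ∏ b, (d b)!)
      = (#{a | p a})! * (#{a | ¬ p a})! := by
  have hrestrict : ∀ (q : α → Prop) [DecidablePred q] (f : α → β) (b : β),
      #{x : {a // q a} | f x = b} = #{a | q a ∧ f a = b} := fun q _ f b => by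
    rw [← Fintype.card_subtype, ← Fintype.card_subtype,
      Fintype.card_congr (Equiv.subtypeSubtypeEquivSubtypeInter q (f · = b))]
  have hcard : #{f : α → β | ∀ b, #{a | p a ∧ f a = b} = c b ∧ #{a | ¬ p a ∧ f a = b} = d b}
      = #{f : {a // p a} → β | ∀ b, #{a | f a = b} = c b}
        * #{f : {a // ¬ p a} → β | ∀ b, #{a | f a = b} = d b} := by
    rw [← card_product]
    refine card_equiv (Equiv.piEquivPiSubtypeProd p fun _ => β) fun f => ?_
    simp [forall_and, hrestrict]
  rw [hcard, mul_mul_mul_comm,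
    card_filter_card_fiber_eq_mul_prod_factorial c (by rw [hc, Fintype.card_subtype]),
    card_filter_card_fiber_eq_mul_prod_factorial d (by rw [hd, Fintype.card_subtype]),
    Fintype.card_subtype, Fintype.card_subtype]

end Counting

lemma apply_sort_le_iff_lt_card {m : ℕ} {α : Type*} [LinearOrder α] (f : Fin m → α) (t : α)
    (k : Fin m) : f (Tuple.sort f k) ≤ t ↔ (k : ℕ) < #{i | f i ≤ t} := by
  rw [← Function.comp_apply (f := f),
    ← Tuple.lt_card_le_iff_apply_le_of_monotone (Tuple.monotone_sort f),
    card_equiv (Tuple.sort f) (t := {i | f i ≤ t}) (by simp)]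

lemma Fin.card_le_iff_notMem_of_isLowerSet {k : ℕ} {s : Finset (Fin k)}
    (hs : IsLowerSet (s : Set (Fin k))) (a : Fin k) : #s ≤ a ↔ a ∉ s := by
  constructor
  · intro hcard ha
    have := card_le_card fun b hb => hs (mem_Iic.1 hb) ha
    rw [Fin.card_Iic] at this
    omega
  · intro ha
    simpa using card_le_card fun b hb => mem_Iio.2 (lt_of_not_ge fun hab => ha (hs hab hb))

section Cells

variable {e : ℕ} {y : Fin (e + 2) → ℝ}

/-- The number of interior points `y 1, …, y e` below `x`. On `[y 0, y (e + 1)]` the cell of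
index `0` is `[y 0, y 1]` and that of index `a > 0` is `(y a, y (a + 1)]`. -/
noncomputable def cellIndex (y : Fin (e + 2) → ℝ) (x : ℝ) : Fin (e + 1) :=
  ⟨#{a : Fin e | y a.succ.castSucc < x},
    Nat.lt_succ_of_le ((card_filter_le _ _).trans_eq (card_fin e))⟩

lemma cellIndex_le_castSucc_iff (hy : Monotone y) (x : ℝ) (a : Fin e) :
    cellIndex y x ≤ a.castSucc ↔ x ≤ y a.succ.castSucc := by
  rw [Fin.le_def, cellIndex, Fin.val_castSucc, Fin.card_le_iff_notMem_of_isLowerSet]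
  · simp
  · intro b c hcb hc
    simp only [coe_filter, mem_univ, true_and, Set.mem_ofPred_eq] at hc ⊢
    exact (hy (by simpa using hcb)).trans_lt hc

lemma cellIndex_le_iff (hy : Monotone y) {x : ℝ} (hx : x ≤ y (Fin.last (e + 1)))
    (b : Fin (e + 1)) : cellIndex y x ≤ b ↔ x ≤ y b.succ := by
  induction b using Fin.lastCases with
  | last => exact iff_of_true (Fin.le_last _) (by simpa using hx)
  | cast a => rw [cellIndex_le_castSucc_iff hy, Fin.succ_castSucc]

lemma monotone_cellIndex (y : Fin (e + 2) → ℝ) : Monotone (cellIndex y) := fun _ _ hx =>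
  Fin.mk_le_mk.2 <| card_le_card <| monotone_filter_right _ fun _ _ h => h.trans_le hx

lemma cellIndex_lt_succ_iff (hy : Monotone y) (x : ℝ) (a : Fin e) :
    cellIndex y x < a.succ ↔ x ≤ y a.succ.castSucc := by
  rw [← cellIndex_le_castSucc_iff hy, Fin.lt_def, Fin.le_def]
  simp

lemma measurable_cellIndex (y : Fin (e + 2) → ℝ) : Measurable (cellIndex y) :=
  (monotone_cellIndex y).measurable

lemma Continuous.eq_zero_of_forall_lt {F : ℝ → ℝ} (hF : Continuous F) {a : ℝ}
    (h : ∀ x < a, F x = 0) : F a = 0 :=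
  Set.EqOn.closure (s := Set.Iio a) (g := 0) h hF continuous_const
    (by rw [closure_Iio]; exact Set.mem_Iic.2 le_rfl)

lemma measureReal_preimage_cellIndex {Ω : Type*} [MeasurableSpace Ω] {μ : Measure Ω}
    [IsFiniteMeasure μ] (hy : Monotone y) {X : Ω → ℝ} (hX : Measurable X)
    (hXy : ∀ ω, X ω ∈ Set.Icc (y 0) (y (Fin.last (e + 1)))) {F : ℝ → ℝ} (hFc : Continuous F)
    (hF : ∀ x, (μ {ω | X ω ≤ x}).toReal = F x) (a : Fin (e + 1)) :
    (μ (X ⁻¹' (cellIndex y ⁻¹' {a}))).toReal = F (y a.succ) - F (y a.castSucc) := by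
  have hle : X ⁻¹' {x | cellIndex y x ≤ a} = {ω | X ω ≤ y a.succ} :=
    Set.ext fun ω => cellIndex_le_iff hy (hXy ω).2 a
  have hlt : (μ (X ⁻¹' {x | cellIndex y x < a})).toReal = F (y a.castSucc) := by
    induction a using Fin.cases with
    | zero =>
      -- cell `0` is closed at `y 0`, where `X` has no atom since `F` is continuous
      have hF0 : F (y 0) = 0 := hFc.eq_zero_of_forall_lt fun x hx => by
        rw [← hF, show {ω | X ω ≤ x} = ∅ from
          Set.eq_empty_of_forall_notMem fun ω hω => (hx.trans_le (hXy ω).1).not_ge hω]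
        simp
      simp [hF0]
    | succ b =>
      rw [← hF]
      congr 2
      exact Set.ext fun ω => cellIndex_lt_succ_iff hy (X ω) b
  have hdiff : X ⁻¹' (cellIndex y ⁻¹' {a}) =
      X ⁻¹' {x | cellIndex y x ≤ a} \ X ⁻¹' {x | cellIndex y x < a} := by
    ext ω
    exact eq_iff_le_not_lt
  have hsub : X ⁻¹' {x | cellIndex y x < a} ⊆ X ⁻¹' {x | cellIndex y x ≤ a} :=
    Set.preimage_mono (Set.ofPred_subset_ofPred.2 fun _ => le_of_lt)
  rw [hdiff, ← measureReal_def, measureReal_sdiff hsub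
    (hX (measurable_cellIndex y measurableSet_Iio)), measureReal_def, measureReal_def, hle, hF, hlt]

end Cells

lemma ProbabilityTheory.iIndepFun.measure_mem_finset_eq_sum_prod {Ω ι κ : Type*} [MeasurableSpace Ω]
    {μ : Measure Ω} [Fintype ι] [MeasurableSpace κ] [MeasurableSingletonClass κ]
    {Z : ι → Ω → κ} (hZ : ∀ i, Measurable (Z i)) (hind : iIndepFun Z μ) (S : Finset (ι → κ)) :
    μ {ω | (fun i => Z i ω) ∈ S} = ∑ h ∈ S, ∏ i, μ (Z i ⁻¹' {h i}) := by
  have hfiber : ∀ h : ι → κ, (fun ω i => Z i ω) ⁻¹' {h} = ⋂ i, Z i ⁻¹' {h i} := fun h => by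
    ext ω
    simp [funext_iff]
  change μ ((fun ω i => Z i ω) ⁻¹' S) = _
  rw [← sum_measure_preimage_singleton S fun h _ => by
    rw [hfiber]; exact .iInter fun i => hZ i (measurableSet_singleton _)]
  refine sum_congr rfl fun h _ => ?_
  rw [hfiber, hind.meas_iInter fun i => ⟨{h i}, measurableSet_singleton _, rfl⟩]

lemma Fin.sum_tsub_of_monotone {k : ℕ} {f : Fin (k + 1) → ℕ} (hf : Monotone f) :
    ∑ a : Fin k, (f a.succ - f a.castSucc) = f (Fin.last k) - f 0 := by
  induction k with
  | zero => simp
  | succ k ih =>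
    have := ih (hf.comp Fin.strictMono_castSucc.monotone)
    simp only [Function.comp_apply, Fin.castSucc_zero] at this
    rw [Fin.sum_univ_castSucc]
    simp only [Fin.succ_castSucc]
    rw [this, ← Fin.succ_last]
    have h0 := hf (Fin.zero_le (Fin.last k).castSucc)
    have hl := hf (Fin.castSucc_le_succ (Fin.last k))
    omega

lemma prod_ite_eq_prod_pow_card {α β M : Type*} [Fintype α] [Fintype β] [DecidableEq β]
    [CommMonoid M] (p : α → Prop) [DecidablePred p] (u v : β → M) (h : α → β) :
    ∏ i, (if p i then u (h i) else v (h i))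
      = ∏ b, u b ^ #{i | p i ∧ h i = b} * v b ^ #{i | ¬ p i ∧ h i = b} := by
  rw [prod_ite, prod_mul_distrib]
  congr 1 <;>
  · rw [← prod_fiberwise_of_maps_to' (g := h) (t := univ) fun _ _ => mem_univ _]
    simp [filter_filter]

section Assignments

variable {m n e : ℕ}

/-- The paper's `i_a`: the number of indices sent by `h` to the first `a` cells. -/
def cumCount (h : Fin m → Fin (e + 1)) (a : Fin (e + 2)) : Fin (m + 1) :=
  ⟨#{i | (h i).castSucc < a}, Nat.lt_succ_of_le ((card_filter_le _ _).trans_eq (card_fin m))⟩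

/-- The paper's `λ_{a+1}`: the number of indices of the first population sent by `h` to cell `a`. -/
def firstCount (n : ℕ) (h : Fin m → Fin (e + 1)) (a : Fin (e + 1)) : Fin (n + 1) :=
  ⟨#{i : Fin m | (i : ℕ) < n ∧ h i = a}, Nat.lt_succ_of_le <|
    (card_le_card <| monotone_filter_right _ fun _ _ hi => hi.1).trans <|
      Fin.card_filter_val_lt.trans_le (min_le_right _ _)⟩

def admissibleAssignments (n : ℕ) (ns : Fin e → Fin m) (j : ℕ) :
    Finset (Fin m → Fin (e + 1)) :=
  {h | (∀ a : Fin e, (ns a : ℕ) < #{i | h i ≤ a.castSucc})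
    ∧ #{i : Fin m | (i : ℕ) < n ∧ h i = 0} = j}

def admissibleCumCounts (ns : Fin e → Fin m) : Finset (Fin (e + 2) → Fin (m + 1)) :=
  {iv | (iv 0 : ℕ) = 0 ∧ (iv (Fin.last (e + 1)) : ℕ) = m
    ∧ (∀ a : Fin (e + 1), (iv a.castSucc : ℕ) ≤ (iv a.succ : ℕ))
    ∧ ∀ a : Fin e, (ns a : ℕ) + 1 ≤ (iv a.succ.castSucc : ℕ)}

def admissibleFirstCounts (n j : ℕ) (iv : Fin (e + 2) → Fin (m + 1)) :
    Finset (Fin (e + 1) → Fin (n + 1)) :=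
  {lv | (lv 0 : ℕ) = j ∧ (∑ a, (lv a : ℕ)) = n
    ∧ ∀ a : Fin (e + 1), (lv a : ℕ) ≤ (iv a.succ : ℕ) - (iv a.castSucc : ℕ)}

lemma cumCount_zero (h : Fin m → Fin (e + 1)) : (cumCount h 0 : ℕ) = 0 := by
  simp [cumCount]

lemma cumCount_last (h : Fin m → Fin (e + 1)) : (cumCount h (Fin.last (e + 1)) : ℕ) = m := by
  simp [cumCount, Fin.castSucc_lt_last]

lemma cumCount_succ_eq (h : Fin m → Fin (e + 1)) (a : Fin (e + 1)) :
    (cumCount h a.succ : ℕ) = #{i | h i ≤ a} := by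
  simp [cumCount, Fin.castSucc_lt_succ_iff]

lemma cumCount_succ (n : ℕ) (h : Fin m → Fin (e + 1)) (a : Fin (e + 1)) :
    (cumCount h a.succ : ℕ) = cumCount h a.castSucc
      + (#{i : Fin m | (i : ℕ) < n ∧ h i = a} + #{i : Fin m | ¬ (i : ℕ) < n ∧ h i = a}) := by
  have hsplit : #{i | h i = a}
      = #{i : Fin m | (i : ℕ) < n ∧ h i = a} + #{i : Fin m | ¬ (i : ℕ) < n ∧ h i = a} := by
    rw [← card_filter_add_card_filter_not (s := {i | h i = a}) (fun i => (i : ℕ) < n)]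
    simp only [filter_filter, and_comm]
  have hlt : (cumCount h a.castSucc : ℕ) = #{i | h i < a} := by simp [cumCount]
  rw [← hsplit, cumCount_succ_eq, hlt,
    ← card_union_of_disjoint (disjoint_filter.2 fun i _ hi => hi.ne), ← filter_or]
  simp_rw [le_iff_lt_or_eq]

lemma cumCount_eq_and_firstCount_eq_iff {iv : Fin (e + 2) → Fin (m + 1)}
    {lv : Fin (e + 1) → Fin (n + 1)} (h0 : (iv 0 : ℕ) = 0)
    (hmono : ∀ a : Fin (e + 1), (iv a.castSucc : ℕ) ≤ iv a.succ)
    (hle : ∀ a, (lv a : ℕ) ≤ iv a.succ - iv a.castSucc) (h : Fin m → Fin (e + 1)) :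
    cumCount h = iv ∧ firstCount n h = lv ↔
      ∀ a, #{i : Fin m | (i : ℕ) < n ∧ h i = a} = lv a
        ∧ #{i : Fin m | ¬ (i : ℕ) < n ∧ h i = a} = iv a.succ - iv a.castSucc - lv a := by
  constructor
  · rintro ⟨rfl, rfl⟩ a
    have := cumCount_succ n h a
    exact ⟨rfl, by simp only [firstCount]; omega⟩
  · intro hc
    refine ⟨funext fun a => Fin.ext ?_, funext fun a => Fin.ext (hc a).1⟩
    induction a using Fin.induction with
    | zero => rw [cumCount_zero, h0]
    | succ a ih =>
      have := hc a
      have := hle a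
      have := hmono a
      have := cumCount_succ n h a
      omega

lemma Fin.card_filter_val_lt_of_le (hnm : n ≤ m) : #{i : Fin m | (i : ℕ) < n} = n := by
  rw [Fin.card_filter_val_lt, min_eq_right hnm]

lemma Fin.card_filter_not_val_lt_of_le (hnm : n ≤ m) : #{i : Fin m | ¬ (i : ℕ) < n} = m - n := by
  have := card_filter_add_card_filter_not (s := univ) fun i : Fin m => (i : ℕ) < n
  rw [Finset.card_fin, Fin.card_filter_val_lt_of_le hnm] at this
  omega

lemma sum_card_filter_lt_and_eq (hnm : n ≤ m) (h : Fin m → Fin (e + 1)) :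
    ∑ a, #{i : Fin m | (i : ℕ) < n ∧ h i = a} = n := by
  calc ∑ a, #{i : Fin m | (i : ℕ) < n ∧ h i = a} = #{i : Fin m | (i : ℕ) < n} := by
        rw [card_eq_sum_card_fiberwise (f := h) (t := univ) fun _ _ => mem_univ _]
        simp only [filter_filter]
    _ = n := Fin.card_filter_val_lt_of_le hnm

variable {ns : Fin e → Fin m} {j : ℕ}

lemma cumCount_mem_admissibleCumCounts {h : Fin m → Fin (e + 1)}
    (hh : h ∈ admissibleAssignments n ns j) : cumCount h ∈ admissibleCumCounts ns := by
  refine mem_filter.2 ⟨mem_univ _, cumCount_zero h, cumCount_last h,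
    fun a => (cumCount_succ n h a).trans_ge (Nat.le_add_right _ _), fun a => ?_⟩
  rw [← Fin.succ_castSucc, cumCount_succ_eq]
  exact (mem_filter.1 hh).2.1 a

lemma firstCount_mem_admissibleFirstCounts (hnm : n ≤ m) {h : Fin m → Fin (e + 1)}
    (hh : h ∈ admissibleAssignments n ns j) :
    firstCount n h ∈ admissibleFirstCounts n j (cumCount h) := by
  refine mem_filter.2 ⟨mem_univ _, (mem_filter.1 hh).2.2, sum_card_filter_lt_and_eq hnm h,
    fun a => ?_⟩
  have := cumCount_succ n h a
  simp only [firstCount]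
  omega

lemma filter_admissibleAssignments_eq {iv : Fin (e + 2) → Fin (m + 1)}
    {lv : Fin (e + 1) → Fin (n + 1)} (hiv : iv ∈ admissibleCumCounts ns)
    (hlv : lv ∈ admissibleFirstCounts n j iv) :
    {h ∈ {h ∈ admissibleAssignments n ns j | cumCount h = iv} | firstCount n h = lv}
      = ({h | ∀ a, #{i : Fin m | (i : ℕ) < n ∧ h i = a} = lv a
          ∧ #{i : Fin m | ¬ (i : ℕ) < n ∧ h i = a} = iv a.succ - iv a.castSucc - lv a} :
        Finset (Fin m → Fin (e + 1))) := by
  obtain ⟨-, h0, -, hmono, hns⟩ := mem_filter.1 hiv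
  obtain ⟨-, hj, -, hle⟩ := mem_filter.1 hlv
  ext h
  simp only [filter_filter, mem_filter, mem_univ, true_and,
    ← cumCount_eq_and_firstCount_eq_iff h0 hmono hle]
  refine ⟨fun hh => hh.2, fun hh => ⟨mem_filter.2 ⟨mem_univ _, fun a => ?_, ?_⟩, hh⟩⟩
  · have := hns a
    rw [← Fin.succ_castSucc, ← hh.1, cumCount_succ_eq] at this
    omega
  · rw [← hj, ← hh.2]
    rfl

lemma sum_filter_admissibleAssignments_eq (hnm : n ≤ m) {iv : Fin (e + 2) → Fin (m + 1)}
    {lv : Fin (e + 1) → Fin (n + 1)} (hiv : iv ∈ admissibleCumCounts ns)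
    (hlv : lv ∈ admissibleFirstCounts n j iv) (u v : Fin (e + 1) → ℝ) :
    ∑ h ∈ {h ∈ {h ∈ admissibleAssignments n ns j | cumCount h = iv} | firstCount n h = lv},
        ∏ a, u a ^ #{i : Fin m | (i : ℕ) < n ∧ h i = a}
          * v a ^ #{i : Fin m | ¬ (i : ℕ) < n ∧ h i = a}
      = (n ! : ℝ) * ((m - n)! : ℝ) * ∏ a, u a ^ (lv a : ℕ)
          * v a ^ ((iv a.succ : ℕ) - (iv a.castSucc : ℕ) - (lv a : ℕ))
          / (((lv a : ℕ)! : ℝ) * (((iv a.succ : ℕ) - (iv a.castSucc : ℕ) - (lv a : ℕ))! : ℝ)) := by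
  obtain ⟨-, h0, hlast, hmono, -⟩ := mem_filter.1 hiv
  obtain ⟨-, -, hsum, hle⟩ := mem_filter.1 hlv
  have htotal : ∑ a : Fin (e + 1), ((iv a.succ : ℕ) - iv a.castSucc) = m := by
    rw [Fin.sum_tsub_of_monotone (f := fun a => (iv a : ℕ)) (Fin.monotone_iff_le_succ.2 hmono),
      hlast, h0, tsub_zero]
  have hcount := card_filter_card_fiber_pair_mul_prod_factorial (fun i : Fin m => (i : ℕ) < n)
    (fun a => (lv a : ℕ)) (fun a => (iv a.succ : ℕ) - iv a.castSucc - lv a)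
    (hsum.trans (Fin.card_filter_val_lt_of_le hnm).symm)
    (by rw [sum_tsub_distrib _ fun a _ => hle a, htotal, hsum,
      Fin.card_filter_not_val_lt_of_le hnm])
  rw [Fin.card_filter_val_lt_of_le hnm, Fin.card_filter_not_val_lt_of_le hnm] at hcount
  have hcountℝ := congr_arg (Nat.cast (R := ℝ)) hcount
  push_cast at hcountℝ
  -- switch from the generic decidability instance of `∀ b, …` in `hcount` to the one for `Fin`
  rw [filter_congr_decidable] at hcountℝ
  rw [filter_admissibleAssignments_eq hiv hlv,
    sum_congr rfl fun h hh => prod_congr rfl fun a _ => by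
      rw [((mem_filter.1 hh).2 a).1, ((mem_filter.1 hh).2 a).2],
    sum_const, nsmul_eq_mul, prod_div_distrib, ← mul_div_assoc, eq_div_iff (by positivity)]
  simp only [prod_mul_distrib]
  linear_combination (∏ a, u a ^ (lv a : ℕ))
    * (∏ a, v a ^ ((iv a.succ : ℕ) - iv a.castSucc - lv a)) * hcountℝ

theorem sum_admissibleAssignments_prod_pow_eq (hnm : n ≤ m) (ns : Fin e → Fin m) (j : ℕ)
    (u v : Fin (e + 1) → ℝ) :
    ∑ h ∈ admissibleAssignments n ns j,
        ∏ a, u a ^ #{i : Fin m | (i : ℕ) < n ∧ h i = a}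
          * v a ^ #{i : Fin m | ¬ (i : ℕ) < n ∧ h i = a}
      = ∑ iv ∈ admissibleCumCounts ns, ∑ lv ∈ admissibleFirstCounts n j iv,
          (n ! : ℝ) * ((m - n)! : ℝ) * ∏ a, u a ^ (lv a : ℕ)
            * v a ^ ((iv a.succ : ℕ) - (iv a.castSucc : ℕ) - (lv a : ℕ))
            / (((lv a : ℕ)! : ℝ)
              * (((iv a.succ : ℕ) - (iv a.castSucc : ℕ) - (lv a : ℕ))! : ℝ)) := by
  rw [← sum_fiberwise_of_maps_to fun h hh => cumCount_mem_admissibleCumCounts hh]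
  refine sum_congr rfl fun iv hiv => ?_
  rw [← sum_fiberwise_of_maps_to fun h hh => (mem_filter.1 hh).2 ▸
    firstCount_mem_admissibleFirstCounts hnm (mem_filter.1 hh).1]
  exact sum_congr rfl fun lv hlv => sum_filter_admissibleAssignments_eq hnm hiv hlv u v

end Assignments

lemma cellIndex_comp_mem_admissibleAssignments_iff {m n e : ℕ} {y : Fin (e + 2) → ℝ}
    (hy : Monotone y) (ns : Fin e → Fin m) (j : ℕ) {x : Fin m → ℝ} (hx0 : ∀ i, 0 ≤ x i)
    (hx1 : ∀ i, x i ≤ y (Fin.last (e + 1))) :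
    cellIndex y ∘ x ∈ admissibleAssignments n ns j ↔
      (∀ a : Fin e, x (Tuple.sort x (ns a)) ≤ y a.succ.castSucc)
        ∧ #{i : Fin m | (i : ℕ) < n ∧ x i ∈ Set.Icc 0 (y 1)} = j := by
  simp only [admissibleAssignments, mem_filter, mem_univ, true_and, Function.comp_apply,
    cellIndex_le_castSucc_iff hy, apply_sort_le_iff_lt_card]
  have hcell0 : ∀ i, cellIndex y (x i) = 0 ↔ x i ∈ Set.Icc 0 (y 1) := fun i => by
    rw [← nonpos_iff_eq_zero, cellIndex_le_iff hy (hx1 i)]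
    exact ⟨fun h => ⟨hx0 i, h⟩, fun h => h.2⟩
  simp only [hcell0]

theorem stmt1_general {Ω : Type*} [MeasurableSpace Ω] (μ : Measure Ω) [IsProbabilityMeasure μ]
    (m n e : ℕ) (hnm : n ≤ m)
    (X : Fin m → Ω → ℝ) (hmeas : ∀ i, Measurable (X i))
    (hrange : ∀ i ω, X i ω ∈ Set.Icc (0 : ℝ) 1)
    (hindep : iIndepFun X μ)
    (F G : ℝ → ℝ) (hFc : Continuous F) (hGc : Continuous G)
    (hF : ∀ i : Fin m, (i : ℕ) < n → ∀ x, (μ {ω | X i ω ≤ x}).toReal = F x)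
    (hG : ∀ i : Fin m, n ≤ (i : ℕ) → ∀ x, (μ {ω | X i ω ≤ x}).toReal = G x)
    -- the order statistics: `Y · ω` is the nondecreasing rearrangement of `X · ω`
    (Y : Fin m → Ω → ℝ)
    (hY : ∀ ω, (fun k => Y k ω) = (fun i => X i ω) ∘ Tuple.sort (fun i => X i ω))
    -- the indices `n₁ < n₂ < … < n_e` (0-based: paper's `n_a` is `(ns a : ℕ) + 1`)
    (ns : Fin e → Fin m)
    (y : Fin (e + 2) → ℝ) (hy : Monotone y) (hy0 : y 0 = 0) (hy1 : y (Fin.last (e + 1)) = 1)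
    (j : ℕ) :
    (μ ({ω | ∀ a : Fin e, Y (ns a) ω ≤ y a.succ.castSucc}
        ∩ {ω | (Finset.univ.filter fun i : Fin m =>
            (i : ℕ) < n ∧ X i ω ∈ Set.Icc 0 (y 1)).card = j})).toReal
      = ∑ iv ∈ Finset.univ.filter (fun iv : Fin (e + 2) → Fin (m + 1) =>
            (iv 0 : ℕ) = 0 ∧ (iv (Fin.last (e + 1)) : ℕ) = m
            ∧ (∀ a : Fin (e + 1), (iv a.castSucc : ℕ) ≤ (iv a.succ : ℕ))
            ∧ ∀ a : Fin e, (ns a : ℕ) + 1 ≤ (iv a.succ.castSucc : ℕ)),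
          ∑ lv ∈ Finset.univ.filter (fun lv : Fin (e + 1) → Fin (n + 1) =>
              (lv 0 : ℕ) = j ∧ (∑ a, (lv a : ℕ)) = n
              ∧ ∀ a : Fin (e + 1), (lv a : ℕ) ≤ (iv a.succ : ℕ) - (iv a.castSucc : ℕ)),
            (n.factorial : ℝ) * ((m - n).factorial : ℝ)
              * ∏ a : Fin (e + 1),
                  (F (y a.succ) - F (y a.castSucc)) ^ (lv a : ℕ)
                  * (G (y a.succ) - G (y a.castSucc))
                      ^ ((iv a.succ : ℕ) - (iv a.castSucc : ℕ) - (lv a : ℕ))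
                  / (((lv a : ℕ).factorial : ℝ)
                    * ((((iv a.succ : ℕ) - (iv a.castSucc : ℕ) - (lv a : ℕ)).factorial : ℝ))) := by
  have hXy : ∀ i ω, X i ω ∈ Set.Icc (y 0) (y (Fin.last (e + 1))) := by
    rw [hy0, hy1]
    exact hrange
  have hevent : {ω | ∀ a : Fin e, Y (ns a) ω ≤ y a.succ.castSucc}
        ∩ {ω | #{i : Fin m | (i : ℕ) < n ∧ X i ω ∈ Set.Icc 0 (y 1)} = j}
      = {ω | (fun i => cellIndex y (X i ω)) ∈ admissibleAssignments n ns j} := by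
    ext ω
    simp only [Set.mem_inter_iff, Set.mem_ofPred_eq, fun k => congrFun (hY ω) k]
    exact (cellIndex_comp_mem_admissibleAssignments_iff hy ns j (fun i => (hrange i ω).1)
      fun i => (hXy i ω).2).symm
  have hcell : ∀ i a, (μ ((fun ω => cellIndex y (X i ω)) ⁻¹' {a})).toReal
      = if (i : ℕ) < n then F (y a.succ) - F (y a.castSucc)
        else G (y a.succ) - G (y a.castSucc) := by
    intro i a
    split_ifs with hi
    · exact measureReal_preimage_cellIndex hy (hmeas i) (hXy i) hFc (hF i hi) a
    · exact measureReal_preimage_cellIndex hy (hmeas i) (hXy i) hGc (hG i (not_lt.1 hi)) a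
  rw [hevent, iIndepFun.measure_mem_finset_eq_sum_prod (Z := fun i ω => cellIndex y (X i ω))
    (fun i => (measurable_cellIndex y).comp (hmeas i))
    (hindep.comp _ fun _ => measurable_cellIndex y),
    ENNReal.toReal_sum fun _ _ => ENNReal.prod_ne_top fun _ _ => measure_ne_top μ _]
  refine (sum_congr rfl fun h _ => ?_).trans (sum_admissibleAssignments_prod_pow_eq hnm ns j
    (fun a => F (y a.succ) - F (y a.castSucc)) (fun a => G (y a.succ) - G (y a.castSucc)))
  rw [ENNReal.toReal_prod, ← prod_ite_eq_prod_pow_card]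
  exact prod_congr rfl fun i _ => hcell i (h i)

/-- For independent `X₁, …, X_m` in `[0,1]`, where `X₁, …, X_n` have common
continuous cdf `F` and `X_{n+1}, …, X_m` have common continuous cdf `G`, with order
statistics `Y₁ ≤ … ≤ Y_m`, indices `n₁ < … < n_e`, points `0 = y₀ ≤ y₁ ≤ … ≤ y_{e+1} = 1`,
`0 ≤ j ≤ n`, and `B` the event that exactly `j` of `X₁, …, X_n` fall in `[0, y₁]`:
`Pr({Y_{n₁} ≤ y₁} ∩ … ∩ {Y_{n_e} ≤ y_e} ∩ B)` equals the double sum over the index set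
`I` and over vectors `λ` (with `λ₁ = j`, `∑ λ_a = n`, `0 ≤ λ_a ≤ i_a − i_{a−1}`) of
`n!(m−n)! ∏_a [F(y_a) − F(y_{a−1})]^{λ_a} [G(y_a) − G(y_{a−1})]^{i_a−i_{a−1}−λ_a}
  / (λ_a! (i_a−i_{a−1}−λ_a)!)`. -/
theorem stmt1 {Ω : Type*} [MeasurableSpace Ω] (μ : Measure Ω) [IsProbabilityMeasure μ]
    (m n e : ℕ) (hnm : n ≤ m)
    (X : Fin m → Ω → ℝ) (hmeas : ∀ i, Measurable (X i))
    (hrange : ∀ i ω, X i ω ∈ Set.Icc (0 : ℝ) 1)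
    (hindep : iIndepFun X μ)
    (F G : ℝ → ℝ) (hFc : Continuous F) (hGc : Continuous G)
    (hF : ∀ i : Fin m, (i : ℕ) < n → ∀ x, (μ {ω | X i ω ≤ x}).toReal = F x)
    (hG : ∀ i : Fin m, n ≤ (i : ℕ) → ∀ x, (μ {ω | X i ω ≤ x}).toReal = G x)
    -- the order statistics: `Y · ω` is the nondecreasing rearrangement of `X · ω`
    (Y : Fin m → Ω → ℝ)
    (hY : ∀ ω, (fun k => Y k ω) = (fun i => X i ω) ∘ Tuple.sort (fun i => X i ω))
    -- the indices `n₁ < n₂ < … < n_e` (0-based: paper's `n_a` is `(ns a : ℕ) + 1`)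
    (ns : Fin e → Fin m) (hns : StrictMono ns)
    (y : Fin (e + 2) → ℝ) (hy : Monotone y) (hy0 : y 0 = 0) (hy1 : y (Fin.last (e + 1)) = 1)
    (j : ℕ) (hj : j ≤ n) :
    (μ ({ω | ∀ a : Fin e, Y (ns a) ω ≤ y a.succ.castSucc}
        ∩ {ω | (Finset.univ.filter fun i : Fin m =>
            (i : ℕ) < n ∧ X i ω ∈ Set.Icc 0 (y 1)).card = j})).toReal
      = ∑ iv ∈ Finset.univ.filter (fun iv : Fin (e + 2) → Fin (m + 1) =>
            (iv 0 : ℕ) = 0 ∧ (iv (Fin.last (e + 1)) : ℕ) = m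
            ∧ (∀ a : Fin (e + 1), (iv a.castSucc : ℕ) ≤ (iv a.succ : ℕ))
            ∧ ∀ a : Fin e, (ns a : ℕ) + 1 ≤ (iv a.succ.castSucc : ℕ)),
          ∑ lv ∈ Finset.univ.filter (fun lv : Fin (e + 1) → Fin (n + 1) =>
              (lv 0 : ℕ) = j ∧ (∑ a, (lv a : ℕ)) = n
              ∧ ∀ a : Fin (e + 1), (lv a : ℕ) ≤ (iv a.succ : ℕ) - (iv a.castSucc : ℕ)),
            (n.factorial : ℝ) * ((m - n).factorial : ℝ)
              * ∏ a : Fin (e + 1),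
                  (F (y a.succ) - F (y a.castSucc)) ^ (lv a : ℕ)
                  * (G (y a.succ) - G (y a.castSucc))
                      ^ ((iv a.succ : ℕ) - (iv a.castSucc : ℕ) - (lv a : ℕ))
                  / (((lv a : ℕ).factorial : ℝ)
                    * ((((iv a.succ : ℕ) - (iv a.castSucc : ℕ) - (lv a : ℕ)).factorial : ℝ))) :=
  stmt1_general μ m n e hnm X hmeas hrange hindep F G hFc hGc hF hG Y hY ns y hy hy0 hy1 j
end

section
/- Let ε₁,…,ε_N be independent normal random variables each with mean μ_A and variance σ² (σ > 0), let ε̄ be their sample mean, let Z = (ε̄ − μ₀)/(σ/√N), and define the two‑sided p‑value X = 2Φ(Z) if Z ≤ 0 and X = 2[1 − Φ(Z)] if Z > 0, where Φ is the standard normal cumulative distribution function. Then for every x ∈ (0,1), the cumulative distribution function of X satisfies Pr(X < x) = Φ( Φ⁻¹(x/2) + (μ₀ − μ_A)·√N/σ ) + 1 − Φ( Φ⁻¹(1 − x/2) + (μ₀ − μ_A)·√N/σ ), where Φ⁻¹ denotes the inverse of Φ. -/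
/-!
The sample mean of `N` i.i.d. `𝒩(μ_A, σ²)` variables is `𝒩(μ_A, σ²/N)`, so `Z` is `𝒩(m, 1)` with
`m = (μ_A - μ₀)√N/σ`. As `Φ` is strictly increasing with `Φ 0 = 1/2`, the event `X < x` is
`Z < Φ⁻¹(x/2)` or `Z > Φ⁻¹(1 - x/2)`, of probability `Φ(Φ⁻¹(x/2) - m) + 1 - Φ(Φ⁻¹(1 - x/2) - m)`.
-/

open MeasureTheory ProbabilityTheory Set
open scoped NNReal

namespace ProbabilityTheory

variable {ι Ω : Type*} {mΩ : MeasurableSpace Ω} {P : Measure Ω}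

lemma HasLaw.of_map_eq {𝓧 : Type*} {m𝓧 : MeasurableSpace 𝓧} {X : Ω → 𝓧} {ν : Measure 𝓧}
    [NeZero ν] (h : P.map X = ν) : HasLaw X ν P :=
  ⟨.of_map_ne_zero (h ▸ NeZero.ne ν), h⟩

lemma iIndepFun.hasLaw_sum_gaussianReal [IsProbabilityMeasure P] {X : ι → Ω → ℝ}
    (hX : iIndepFun X P) {m : ι → ℝ} {v : ι → ℝ≥0}
    (hlaw : ∀ i, HasLaw (X i) (gaussianReal (m i) (v i)) P) (s : Finset ι) :
    HasLaw (∑ i ∈ s, X i) (gaussianReal (∑ i ∈ s, m i) (∑ i ∈ s, v i)) P := by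
  classical
  induction s using Finset.induction_on with
  | empty =>
    simp only [Finset.sum_empty, gaussianReal_zero_var]
    exact ⟨aemeasurable_const, by simp [Pi.zero_def, Measure.map_const]⟩
  | insert a s ha ih =>
    have hind : IndepFun (∑ i ∈ s, X i) (X a) P :=
      hX.indepFun_finsetSum_of_notMem₀ (fun i => (hlaw i).aemeasurable) ha
    simp only [Finset.sum_insert ha]
    rw [add_comm (X a), add_comm (m a), add_comm (v a)]
    exact ⟨ih.aemeasurable.add (hlaw a).aemeasurable,
      gaussianReal_add_gaussianReal_of_indepFun hind ih.map_eq (hlaw a).map_eq⟩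

lemma iIndepFun.hasLaw_sampleMean_gaussianReal [IsProbabilityMeasure P] [Fintype ι] [Nonempty ι]
    {X : ι → Ω → ℝ} (hX : iIndepFun X P) {m σ : ℝ}
    (hlaw : ∀ i, HasLaw (X i) (gaussianReal m (.mk (σ ^ 2) (sq_nonneg σ))) P) :
    HasLaw (fun ω => (Fintype.card ι : ℝ)⁻¹ * ∑ i, X i ω)
      (gaussianReal m (.mk ((σ / √(Fintype.card ι)) ^ 2) (sq_nonneg _))) P := by
  have hn : (0 : ℝ) < Fintype.card ι := by exact_mod_cast Fintype.card_pos
  convert gaussianReal_const_mul (hX.hasLaw_sum_gaussianReal hlaw Finset.univ)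
    (Fintype.card ι : ℝ)⁻¹ using 2
  · simp
  · simp [hn.ne']
  · ext
    simp [div_pow, Real.sq_sqrt hn.le]
    field_simp

lemma HasLaw.standardize_gaussianReal {Y : Ω → ℝ} {m τ : ℝ}
    (hY : HasLaw Y (gaussianReal m (.mk (τ ^ 2) (sq_nonneg τ))) P) (hτ : τ ≠ 0) (c : ℝ) :
    HasLaw (fun ω => (Y ω - c) / τ) (gaussianReal ((m - c) / τ) 1) P := by
  convert gaussianReal_mul_const (gaussianReal_sub_const hY c) τ⁻¹ using 2
  · simp [div_eq_mul_inv]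
  · ring
  · ext
    simp [hτ]

lemma measureReal_Ioi_eq_one_sub_cdf (ν : Measure ℝ) [IsProbabilityMeasure ν] (x : ℝ) :
    ν.real (Ioi x) = 1 - cdf ν x := by
  rw [cdf_eq_real, ← compl_Iic, probReal_compl_eq_one_sub measurableSet_Iic]

lemma measureReal_Iio_union_Ioi (ν : Measure ℝ) [IsProbabilityMeasure ν] [NullSingletonClass ν]
    {a b : ℝ} (hab : a ≤ b) : ν.real (Iio a ∪ Ioi b) = cdf ν a + 1 - cdf ν b := by
  have hdisj : Disjoint (Iio a) (Ioi b) := (Iic_disjoint_Ioi hab).mono_left Iio_subset_Iic_self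
  rw [measureReal_union hdisj measurableSet_Ioi, measureReal_Ioi_eq_one_sub_cdf,
    measureReal_congr Iio_ae_eq_Iic, ← cdf_eq_real]
  ring

lemma cdf_gaussianReal (μ : ℝ) (v : ℝ≥0) (x : ℝ) :
    cdf (gaussianReal μ v) x = cdf (gaussianReal 0 v) (x - μ) := by
  have hshift : gaussianReal μ v = (gaussianReal 0 v).map (· + μ) := by
    rw [gaussianReal_map_add_const, zero_add]
  rw [cdf_eq_real, cdf_eq_real, hshift,
    map_measureReal_apply (measurable_add_const μ) measurableSet_Iic]
  congr 1
  ext y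
  simp [le_sub_iff_add_le]

lemma strictMono_cdf_gaussianReal (μ : ℝ) {v : ℝ≥0} (hv : v ≠ 0) :
    StrictMono (cdf (gaussianReal μ v)) := by
  intro s t hst
  have hpos : gaussianReal μ v (Ioc s t) ≠ 0 := fun h =>
    hst.not_ge (by simpa using gaussianReal_absolutelyContinuous' μ hv h)
  rw [← measure_cdf (gaussianReal μ v), StieltjesFunction.measure_Ioc] at hpos
  simpa using hpos

lemma cdf_gaussianReal_self (μ : ℝ) {v : ℝ≥0} (hv : v ≠ 0) : cdf (gaussianReal μ v) μ = 2⁻¹ := by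
  have := nullSingletonClass_gaussianReal (μ := μ) hv
  have hreflect : (gaussianReal μ v).map (2 * μ - ·) = gaussianReal μ v := by
    rw [gaussianReal_map_const_sub]; ring_nf
  have hsymm : (gaussianReal μ v).real (Iic μ) = (gaussianReal μ v).real (Ioi μ) := by
    conv_lhs => rw [← hreflect]
    rw [map_measureReal_apply (by fun_prop) measurableSet_Iic, measureReal_congr Ioi_ae_eq_Ici]
    congr 1
    ext y
    simp only [mem_preimage, mem_Iic, mem_Ici]
    constructor <;> intro h <;> linarith
  rw [measureReal_Ioi_eq_one_sub_cdf, ← cdf_eq_real] at hsymm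
  linarith

end ProbabilityTheory

noncomputable def twoSidedPValue (F : ℝ → ℝ) (z : ℝ) : ℝ :=
  if z ≤ 0 then 2 * F z else 2 * (1 - F z)

lemma twoSidedPValue_lt_iff {F : ℝ → ℝ} (hF : StrictMono F) (hF0 : F 0 = 2⁻¹) {x a b : ℝ}
    (hx : x ≤ 1) (ha : F a = x / 2) (hb : F b = 1 - x / 2) (z : ℝ) :
    twoSidedPValue F z < x ↔ z < a ∨ b < z := by
  have ha0 : a ≤ 0 := hF.le_iff_le.mp (by rw [ha, hF0]; linarith)
  have hb0 : 0 ≤ b := hF.le_iff_le.mp (by rw [hb, hF0]; linarith)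
  unfold twoSidedPValue
  split_ifs with hz
  · have hbz : ¬ b < z := by linarith
    rw [or_iff_left hbz, ← hF.lt_iff_lt (a := z), ha]
    constructor <;> intro <;> linarith
  · have hza : ¬ z < a := by linarith
    rw [or_iff_right hza, ← hF.lt_iff_lt (b := z), hb]
    constructor <;> intro <;> linarith

theorem stmt10_general {Ω : Type*} [MeasurableSpace Ω] (μ : Measure Ω) [IsProbabilityMeasure μ]
    (N : ℕ) (hN : 0 < N) (μ₀ μA σ : ℝ) (hσ : 0 < σ)
    (ε : Fin N → Ω → ℝ)
    (hindep : iIndepFun ε μ)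
    (hlaw : ∀ δ, Measure.map (ε δ) μ = gaussianReal μA ⟨σ ^ 2, sq_nonneg σ⟩)
    (εbar : Ω → ℝ) (hεbar : ∀ ω, εbar ω = (N : ℝ)⁻¹ * ∑ δ, ε δ ω)
    (Z : Ω → ℝ) (hZ : ∀ ω, Z ω = (εbar ω - μ₀) / (σ / Real.sqrt N))
    (Φ : ℝ → ℝ) (hΦ : ∀ x, Φ x = ((gaussianReal 0 1) (Set.Iic x)).toReal)
    (Φinv : ℝ → ℝ)
    (hΦinv : ∀ p ∈ Set.Ioo (0 : ℝ) 1, Φ (Φinv p) = p)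
    (X : Ω → ℝ)
    (hX : ∀ ω, X ω = if Z ω ≤ 0 then 2 * Φ (Z ω) else 2 * (1 - Φ (Z ω))) :
    ∀ x ∈ Set.Ioo (0 : ℝ) 1,
      (μ {ω | X ω < x}).toReal
        = Φ (Φinv (x / 2) + (μ₀ - μA) * Real.sqrt N / σ)
          + 1 - Φ (Φinv (1 - x / 2) + (μ₀ - μA) * Real.sqrt N / σ) := by
  rintro x ⟨hx0, hx1⟩
  have : Nonempty (Fin N) := Fin.pos_iff_nonempty.mp hN
  obtain rfl : Φ = cdf (gaussianReal 0 1) := funext fun t => by rw [hΦ, cdf_eq_real]; rfl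
  have hεlaw δ : HasLaw (ε δ) (gaussianReal μA (.mk (σ ^ 2) (sq_nonneg σ))) μ :=
    .of_map_eq (hlaw δ)
  set m := (μA - μ₀) / (σ / √N) with hm
  have hZlaw : HasLaw Z (gaussianReal m 1) μ := by
    convert (hindep.hasLaw_sampleMean_gaussianReal hεlaw).standardize_gaussianReal
      (by positivity) μ₀ using 2 <;> simp [hZ, hεbar, hm]
  set a := Φinv (x / 2)
  set b := Φinv (1 - x / 2)
  have ha : cdf (gaussianReal 0 1) a = x / 2 := hΦinv _ ⟨by linarith, by linarith⟩
  have hb : cdf (gaussianReal 0 1) b = 1 - x / 2 := hΦinv _ ⟨by linarith, by linarith⟩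
  have hmono := strictMono_cdf_gaussianReal 0 one_ne_zero
  have hab : a ≤ b := hmono.le_iff_le.mp (by rw [ha, hb]; linarith)
  have hevent : {ω | X ω < x} = {ω | Z ω ∈ Iio a ∪ Ioi b} := by
    ext ω
    rw [mem_ofPred_eq, mem_ofPred_eq, hX ω]
    exact twoSidedPValue_lt_iff hmono (cdf_gaussianReal_self 0 one_ne_zero) hx1.le ha hb (Z ω)
  have hshift (t : ℝ) : t - m = t + (μ₀ - μA) * √N / σ := by
    rw [hm]
    field_simp
    ring
  have := nullSingletonClass_gaussianReal (μ := m) one_ne_zero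
  rw [← measureReal_def, hevent,
    hZlaw.measureReal_eq (p := (· ∈ Iio a ∪ Ioi b)) (measurableSet_Iio.union measurableSet_Ioi),
    ofPred_mem_eq, measureReal_Iio_union_Ioi _ hab, cdf_gaussianReal m, cdf_gaussianReal m,
    hshift, hshift]

/-- With `ε₁, …, ε_N` i.i.d. `N(μ_A, σ²)` (σ > 0), sample mean `ε̄`,
`Z = (ε̄ − μ₀)/(σ/√N)` and two-sided p-value `X = 2Φ(Z)` for `Z ≤ 0`,
`X = 2(1 − Φ(Z))` for `Z > 0`, then for every `x ∈ (0,1)`: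
`Pr(X < x) = Φ(Φ⁻¹(x/2) + (μ₀ − μ_A)√N/σ) + 1 − Φ(Φ⁻¹(1 − x/2) + (μ₀ − μ_A)√N/σ)`. -/
theorem stmt10 {Ω : Type*} [MeasurableSpace Ω] (μ : Measure Ω) [IsProbabilityMeasure μ]
    (N : ℕ) (hN : 0 < N) (μ₀ μA σ : ℝ) (hσ : 0 < σ)
    (ε : Fin N → Ω → ℝ) (hmeas : ∀ δ, Measurable (ε δ))
    (hindep : iIndepFun ε μ)
    (hlaw : ∀ δ, Measure.map (ε δ) μ = gaussianReal μA ⟨σ ^ 2, sq_nonneg σ⟩)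
    (εbar : Ω → ℝ) (hεbar : ∀ ω, εbar ω = (N : ℝ)⁻¹ * ∑ δ, ε δ ω)
    (Z : Ω → ℝ) (hZ : ∀ ω, Z ω = (εbar ω - μ₀) / (σ / Real.sqrt N))
    (Φ : ℝ → ℝ) (hΦ : ∀ x, Φ x = ((gaussianReal 0 1) (Set.Iic x)).toReal)
    (Φinv : ℝ → ℝ)
    (hΦinv : ∀ p ∈ Set.Ioo (0 : ℝ) 1, Φ (Φinv p) = p)
    (hinvΦ : ∀ x : ℝ, Φinv (Φ x) = x)
    (X : Ω → ℝ)
    (hX : ∀ ω, X ω = if Z ω ≤ 0 then 2 * Φ (Z ω) else 2 * (1 - Φ (Z ω))) :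
    ∀ x ∈ Set.Ioo (0 : ℝ) 1,
      (μ {ω | X ω < x}).toReal
        = Φ (Φinv (x / 2) + (μ₀ - μA) * Real.sqrt N / σ)
          + 1 - Φ (Φinv (1 - x / 2) + (μ₀ - μA) * Real.sqrt N / σ) :=
  stmt10_general μ N hN μ₀ μA σ hσ ε hindep hlaw εbar hεbar Z hZ Φ hΦ Φinv hΦinv X hX
end
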